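/- Let f ∈ C^0_v and m ≈ n (c₁m ≤ n ≤ c₂m, c₂ ≥ c₁ > 1). If the VP operators V_n^m(w) are uniformly bounded on C^0_v, then lim_{n→∞} ‖[f − V_n^m(w,f)]v‖_∞ = 0, and moreover E_{n+m−1}(f)_v ≤ ‖[f − V_n^m(w,f)]v‖_∞ ≤ C E_{n−m}(f)_v with C independent of n, m, f. -/

import Mathlib

open MeasureTheory Polynomial

set_option maxHeartbeats 1000000

/-- Weighted sup norm `‖f v‖_∞` over `(-1,1)`. -/
noncomputable def wnorm (v f : ℝ → ℝ) : ℝ :=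
  ⨆ x : Set.Ioo (-1 : ℝ) 1, |f x * v x|

/-- Weighted error of best polynomial approximation
`E_n(f)_v = inf_{deg P ≤ n} ‖(f - P) v‖_∞`. -/
noncomputable def Err (v f : ℝ → ℝ) (n : ℕ) : ℝ :=
  ⨅ P : {P : Polynomial ℝ // P.natDegree ≤ n},
    wnorm v (fun x => f x - (P : Polynomial ℝ).eval x)

/-- Besov type norm `‖f‖_{B_r(v)} = ‖f v‖_∞ + ∑_{n≥1} (n+1)^{r-1} E_n(f)_v`
(for `r = 0` the weight is `1/(n+1)`). -/
noncomputable def BesovNorm (v f : ℝ → ℝ) (r : ℝ) : ℝ :=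
  wnorm v f + ∑' k : ℕ, ((k : ℝ) + 2) ^ (r - 1) * Err v f (k + 1)

/-- Membership in the Besov type space `B_r(v)`: summability of the weighted
best approximation errors. -/
def MemB (v f : ℝ → ℝ) (r : ℝ) : Prop :=
  Summable fun k : ℕ => ((k : ℝ) + 2) ^ (r - 1) * Err v f (k + 1)

/-- Membership in `C^0_v` for the Jacobi weight `v = v^{γ,δ}`: `f v` extends
continuously to `[-1,1]` and vanishes at the endpoints where the weight does. -/
def MemC0 (γ δ : ℝ) (f : ℝ → ℝ) : Prop :=
  ∃ g : ℝ → ℝ, ContinuousOn g (Set.Icc (-1 : ℝ) 1) ∧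
    (∀ x ∈ Set.Ioo (-1 : ℝ) 1, g x = f x * ((1 - x) ^ γ * (1 + x) ^ δ)) ∧
    (0 < γ → g 1 = 0) ∧ (0 < δ → g (-1) = 0)

instance : Nonempty (Set.Ioo (-1:ℝ) 1) := ⟨⟨0, by norm_num⟩⟩

instance (n : ℕ) : Nonempty {P : Polynomial ℝ // P.natDegree ≤ n} :=
  ⟨⟨0, by simp⟩⟩

lemma wnorm_nonneg (v f : ℝ → ℝ) : 0 ≤ wnorm v f :=
  Real.iSup_nonneg fun _ => abs_nonneg _

lemma wnorm_le {v f : ℝ → ℝ} {a : ℝ} (ha : 0 ≤ a)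
    (h : ∀ x : Set.Ioo (-1:ℝ) 1, |f x * v x| ≤ a) : wnorm v f ≤ a :=
  Real.iSup_le h ha

lemma le_wnorm {v f : ℝ → ℝ}
    (h : BddAbove (Set.range fun x : Set.Ioo (-1:ℝ) 1 => |f x * v x|))
    (x : Set.Ioo (-1:ℝ) 1) : |f x * v x| ≤ wnorm v f :=
  le_ciSup h x

lemma cont_w {γ δ : ℝ} (hγ : 0 ≤ γ) (hδ : 0 ≤ δ) :
    Continuous (fun x : ℝ => (1 - x) ^ γ * (1 + x) ^ δ) := by
  exact ((Real.continuous_rpow_const hγ).comp (continuous_const.sub continuous_id)).mul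
    ((Real.continuous_rpow_const hδ).comp (continuous_const.add continuous_id))

lemma w_pos {γ δ : ℝ} {x : ℝ} (hx : x ∈ Set.Ioo (-1:ℝ) 1) :
    0 < (1 - x) ^ γ * (1 + x) ^ δ :=
  mul_pos (Real.rpow_pos_of_pos (by linarith [hx.2]) γ)
    (Real.rpow_pos_of_pos (by linarith [hx.1]) δ)

lemma bddAbove_of_ext {γ δ : ℝ} {v : ℝ → ℝ}
    (hv : ∀ x ∈ Set.Ioo (-1 : ℝ) 1, v x = (1 - x) ^ γ * (1 + x) ^ δ)
    {h G : ℝ → ℝ} (hGc : ContinuousOn G (Set.Icc (-1:ℝ) 1))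
    (hGe : ∀ x ∈ Set.Ioo (-1:ℝ) 1, G x = h x * ((1 - x) ^ γ * (1 + x) ^ δ)) :
    BddAbove (Set.range fun x : Set.Ioo (-1:ℝ) 1 => |h x * v x|) := by
  obtain ⟨B, hB⟩ := IsCompact.exists_bound_of_continuousOn isCompact_Icc hGc
  refine ⟨B, ?_⟩
  rintro y ⟨⟨x, hx⟩, rfl⟩
  have : h x * v x = G x := by rw [hGe x hx, hv x hx]
  simp only [this]
  simpa [Real.norm_eq_abs] using hB x (Set.Ioo_subset_Icc_self hx)

lemma memC0_sub_poly {γ δ : ℝ} {f : ℝ → ℝ} (hf : MemC0 γ δ f)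
    (hγ : 0 ≤ γ) (hδ : 0 ≤ δ) (Q : Polynomial ℝ) :
    MemC0 γ δ (fun x => f x - Q.eval x) := by
  obtain ⟨g, hgc, hge, hg1, hg2⟩ := hf
  refine ⟨fun x => g x - Q.eval x * ((1 - x) ^ γ * (1 + x) ^ δ), ?_, ?_, ?_, ?_⟩
  · exact hgc.sub ((Q.continuous.mul (cont_w hγ hδ)).continuousOn)
  · intro x hx; simp only []; rw [hge x hx]; ring
  · intro hγ'
    simp only []
    rw [hg1 hγ']
    norm_num [Real.zero_rpow (ne_of_gt hγ')]
  · intro hδ'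
    simp only []
    rw [hg2 hδ']
    norm_num [Real.zero_rpow (ne_of_gt hδ')]

lemma err_bddBelow (v f : ℝ → ℝ) (n : ℕ) :
    BddBelow (Set.range fun P : {P : Polynomial ℝ // P.natDegree ≤ n} =>
      wnorm v (fun x => f x - (P : Polynomial ℝ).eval x)) := by
  refine ⟨0, ?_⟩; rintro y ⟨P, rfl⟩; exact wnorm_nonneg _ _

lemma err_nonneg (v f : ℝ → ℝ) (n : ℕ) : 0 ≤ Err v f n :=
  le_ciInf fun P => wnorm_nonneg _ _

lemma err_le (v f : ℝ → ℝ) {n : ℕ} {P : Polynomial ℝ} (hP : P.natDegree ≤ n) :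
    Err v f n ≤ wnorm v (fun x => f x - P.eval x) :=
  ciInf_le (err_bddBelow v f n) ⟨P, hP⟩

lemma err_anti (v f : ℝ → ℝ) {n n' : ℕ} (h : n ≤ n') : Err v f n' ≤ Err v f n := by
  refine le_ciInf fun P => ?_
  exact ciInf_le (err_bddBelow v f n') ⟨(P : Polynomial ℝ), P.2.trans h⟩

lemma weier {γ δ : ℝ} (hγ : 0 ≤ γ) (hδ : 0 ≤ δ) {f g : ℝ → ℝ}
    (hgc : ContinuousOn g (Set.Icc (-1:ℝ) 1))
    (hge : ∀ x ∈ Set.Ioo (-1:ℝ) 1, g x = f x * ((1 - x) ^ γ * (1 + x) ^ δ))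
    (hg1 : 0 < γ → g 1 = 0) (hg2 : 0 < δ → g (-1) = 0)
    {ε : ℝ} (hε : 0 < ε) :
    ∃ P : Polynomial ℝ, ∀ x ∈ Set.Ioo (-1:ℝ) 1,
      |(f x - P.eval x) * ((1 - x) ^ γ * (1 + x) ^ δ)| ≤ ε := by
  set w : ℝ → ℝ := fun x => (1 - x) ^ γ * (1 + x) ^ δ with hw
  have hwc : Continuous w := cont_w hγ hδ
  have hwnn : ∀ x ∈ Set.Icc (-1:ℝ) 1, 0 ≤ w x := fun x hx =>
    mul_nonneg (Real.rpow_nonneg (by linarith [hx.2]) γ)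
      (Real.rpow_nonneg (by linarith [hx.1]) δ)
  -- max of w
  obtain ⟨z, hz, hzmax⟩ := isCompact_Icc.exists_isMaxOn (s := Set.Icc (-1:ℝ) 1)
    ⟨0, by norm_num⟩ hwc.continuousOn
  set M := w z with hM
  have hMle : ∀ x ∈ Set.Icc (-1:ℝ) 1, w x ≤ M := fun x hx => hzmax hx
  have hM1 : (1:ℝ) ≤ M := by
    have := hMle 0 (by norm_num)
    have h0 : w 0 = 1 := by simp [hw, Real.one_rpow]
    · calc (1:ℝ) = w 0 := h0.symm
        _ ≤ M := hzmax (by norm_num : (0:ℝ) ∈ Set.Icc (-1:ℝ) 1)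
  have hM0 : 0 < M := lt_of_lt_of_le one_pos hM1
  -- cutoff parameters
  have h1 : ∃ η > 0, 0 < γ → ∀ x ∈ Set.Icc (-1:ℝ) 1, 1 - η < x → |g x| ≤ ε / 2 := by
    by_cases hγ' : 0 < γ
    · have hcw : ContinuousWithinAt g (Set.Icc (-1:ℝ) 1) 1 := hgc 1 (by norm_num)
      rw [Metric.continuousWithinAt_iff] at hcw
      obtain ⟨η, hη, hball⟩ := hcw (ε / 2) (by positivity)
      refine ⟨η, hη, fun _ x hx hxη => ?_⟩
      have hd : dist x 1 < η := by
        rw [Real.dist_eq, abs_of_nonpos (by linarith [hx.2])]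
        linarith
      have := hball hx hd
      rw [hg1 hγ', dist_zero_right, Real.norm_eq_abs] at this
      exact this.le
    · exact ⟨1, one_pos, fun h => absurd h hγ'⟩
  have h2 : ∃ η > 0, 0 < δ → ∀ x ∈ Set.Icc (-1:ℝ) 1, x < -1 + η → |g x| ≤ ε / 2 := by
    by_cases hδ' : 0 < δ
    · have hcw : ContinuousWithinAt g (Set.Icc (-1:ℝ) 1) (-1) := hgc (-1) (by norm_num)
      rw [Metric.continuousWithinAt_iff] at hcw
      obtain ⟨η, hη, hball⟩ := hcw (ε / 2) (by positivity)
      refine ⟨η, hη, fun _ x hx hxη => ?_⟩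
      have hd : dist x (-1) < η := by
        rw [Real.dist_eq, abs_of_nonneg (by linarith [hx.1])]
        linarith
      have := hball hx hd
      rw [hg2 hδ', dist_zero_right, Real.norm_eq_abs] at this
      exact this.le
    · exact ⟨1, one_pos, fun h => absurd h hδ'⟩
  obtain ⟨η₁, hη₁, hcut1⟩ := h1
  obtain ⟨η₂, hη₂, hcut2⟩ := h2
  classical
  -- cutoff functions
  set χp : ℝ → ℝ := fun x => if 0 < γ then min 1 (max 0 ((1 - η₁ / 2 - x) * (2 / η₁))) else 1
    with hχp
  set χm : ℝ → ℝ := fun x => if 0 < δ then min 1 (max 0 ((x - (-1 + η₂ / 2)) * (2 / η₂))) else 1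
    with hχm
  set χ : ℝ → ℝ := fun x => χp x * χm x with hχ
  have hχpc : Continuous χp := by
    rw [hχp]
    by_cases hγ' : 0 < γ <;> simp only [hγ', if_true, if_false]
    · exact continuous_const.min (continuous_const.max
        ((continuous_const.sub continuous_id).mul continuous_const))
    · exact continuous_const
  have hχmc : Continuous χm := by
    rw [hχm]
    by_cases hδ' : 0 < δ <;> simp only [hδ', if_true, if_false]
    · exact continuous_const.min (continuous_const.max
        ((continuous_id.sub continuous_const).mul continuous_const))
    · exact continuous_const
  have hχc : Continuous χ := hχpc.mul hχmc
  have hχp01 : ∀ x, 0 ≤ χp x ∧ χp x ≤ 1 := by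
    intro x; rw [hχp]
    by_cases hγ' : 0 < γ <;> simp only [hγ', if_true, if_false]
    · exact ⟨le_min zero_le_one (le_max_left 0 _), min_le_left _ _⟩
    · exact ⟨zero_le_one, le_refl 1⟩
  have hχm01 : ∀ x, 0 ≤ χm x ∧ χm x ≤ 1 := by
    intro x; rw [hχm]
    by_cases hδ' : 0 < δ <;> simp only [hδ', if_true, if_false]
    · exact ⟨le_min zero_le_one (le_max_left 0 _), min_le_left _ _⟩
    · exact ⟨zero_le_one, le_refl 1⟩
  have hχ01 : ∀ x, 0 ≤ χ x ∧ χ x ≤ 1 := by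
    intro x
    constructor
    · exact mul_nonneg (hχp01 x).1 (hχm01 x).1
    · calc χp x * χm x ≤ 1 * 1 := mul_le_mul (hχp01 x).2 (hχm01 x).2 (hχm01 x).1 zero_le_one
        _ = 1 := mul_one 1
  -- small g where cutoff is active
  have hp_lt : ∀ x, 0 < γ → χp x < 1 → 1 - η₁ < x := by
    intro x hγ' hp
    rw [hχp] at hp
    simp only [hγ', if_true] at hp
    have ht : (1 - η₁ / 2 - x) * (2 / η₁) < 1 := by
      rcases min_lt_iff.1 hp with h | h
      · exact absurd h (lt_irrefl 1)
      · exact lt_of_le_of_lt (le_max_right 0 _) h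
    have h2 := mul_lt_mul_of_pos_right ht (by positivity : (0:ℝ) < η₁ / 2)
    have he : (1 - η₁ / 2 - x) * (2 / η₁) * (η₁ / 2) = 1 - η₁ / 2 - x := by
      field_simp
    rw [he, one_mul] at h2
    linarith
  have hm_lt : ∀ x, 0 < δ → χm x < 1 → x < -1 + η₂ := by
    intro x hδ' hm
    rw [hχm] at hm
    simp only [hδ', if_true] at hm
    have ht : (x - (-1 + η₂ / 2)) * (2 / η₂) < 1 := by
      rcases min_lt_iff.1 hm with h | h
      · exact absurd h (lt_irrefl 1)
      · exact lt_of_le_of_lt (le_max_right 0 _) h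
    have h2 := mul_lt_mul_of_pos_right ht (by positivity : (0:ℝ) < η₂ / 2)
    have he : (x - (-1 + η₂ / 2)) * (2 / η₂) * (η₂ / 2) = x - (-1 + η₂ / 2) := by
      field_simp
    rw [he, one_mul] at h2
    linarith
  have hsmall : ∀ x ∈ Set.Icc (-1:ℝ) 1, χ x < 1 → |g x| ≤ ε / 2 := by
    intro x hx hlt
    have hcases : χp x < 1 ∨ χm x < 1 := by
      by_contra hcon
      push_neg at hcon
      have e1 : χp x = 1 := le_antisymm (hχp01 x).2 hcon.1
      have e2 : χm x = 1 := le_antisymm (hχm01 x).2 hcon.2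
      rw [hχ] at hlt; simp only [e1, e2, mul_one] at hlt; exact absurd hlt (lt_irrefl 1)
    rcases hcases with hp | hm
    · by_cases hγ' : 0 < γ
      · exact hcut1 hγ' x hx (hp_lt x hγ' hp)
      · rw [hχp] at hp; simp only [hγ', if_false] at hp; exact absurd hp (lt_irrefl 1)
    · by_cases hδ' : 0 < δ
      · exact hcut2 hδ' x hx (hm_lt x hδ' hm)
      · rw [hχm] at hm; simp only [hδ', if_false] at hm; exact absurd hm (lt_irrefl 1)
  -- cutoff vanishes near bad endpoints
  have hχp0 : 0 < γ → ∀ x, 1 - η₁ / 2 < x → χp x = 0 := by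
    intro hγ' x hx
    rw [hχp]
    simp only [hγ', if_true]
    have : (1 - η₁ / 2 - x) * (2 / η₁) ≤ 0 :=
      mul_nonpos_of_nonpos_of_nonneg (by linarith) (by positivity)
    rw [max_eq_left this, min_eq_right zero_le_one]
  have hχm0 : 0 < δ → ∀ x, x < -1 + η₂ / 2 → χm x = 0 := by
    intro hδ' x hx
    rw [hχm]
    simp only [hδ', if_true]
    have : (x - (-1 + η₂ / 2)) * (2 / η₂) ≤ 0 :=
      mul_nonpos_of_nonpos_of_nonneg (by linarith) (by positivity)
    rw [max_eq_left this, min_eq_right zero_le_one]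
  -- the function to approximate
  set ψ : ℝ → ℝ := fun x => g x * χ x / w x with hψ
  have hψc : ContinuousOn ψ (Set.Icc (-1:ℝ) 1) := by
    intro x hx
    by_cases hwx : w x = 0
    · -- w vanishes only at bad endpoints
      have hzero : ∃ r > 0, ∀ y, |y - x| < r → χ y = 0 := by
        rcases mul_eq_zero.1 hwx with h | h
        · rw [Real.rpow_eq_zero_iff_of_nonneg (by linarith [hx.2])] at h
          have hx1 : x = 1 := by linarith [h.1, hx.2]
          have hγ' : 0 < γ := lt_of_le_of_ne hγ (Ne.symm h.2)
          refine ⟨η₁ / 2, by positivity, fun y hy => ?_⟩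
          show χp y * χm y = 0
          rw [hχp0 hγ' y ?_, zero_mul]
          rw [hx1] at hy
          have := abs_lt.1 hy
          linarith [this.1]
        · rw [Real.rpow_eq_zero_iff_of_nonneg (by linarith [hx.1])] at h
          have hx1 : x = -1 := by linarith [h.1, hx.1]
          have hδ' : 0 < δ := lt_of_le_of_ne hδ (Ne.symm h.2)
          refine ⟨η₂ / 2, by positivity, fun y hy => ?_⟩
          show χp y * χm y = 0
          rw [hχm0 hδ' y ?_, mul_zero]
          rw [hx1] at hy
          have := abs_lt.1 hy
          linarith [this.2]
      obtain ⟨r, hr, hrz⟩ := hzero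
      have hψx : ψ x = 0 := by
        rw [hψ]
        simp only [hrz x (by simpa using hr), mul_zero, zero_div]
      have hev : ψ =ᶠ[nhdsWithin x (Set.Icc (-1:ℝ) 1)] fun _ => (0:ℝ) := by
        apply Filter.eventually_iff_exists_mem.2
        refine ⟨Metric.ball x r ∩ Set.Icc (-1:ℝ) 1, ?_, ?_⟩
        · exact Filter.inter_mem (mem_nhdsWithin_of_mem_nhds (Metric.ball_mem_nhds x hr))
            self_mem_nhdsWithin
        · intro y hy
          have : |y - x| < r := by
            have := hy.1
            rwa [Metric.mem_ball, Real.dist_eq] at this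
          rw [hψ]
          simp only [hrz y this, mul_zero, zero_div]
      unfold ContinuousWithinAt
      rw [hψx]
      exact tendsto_const_nhds.congr' hev.symm
    · exact ((hgc x hx).mul hχc.continuousWithinAt).div hwc.continuousWithinAt hwx
  -- Weierstrass
  obtain ⟨P, hP⟩ := exists_polynomial_near_of_continuousOn (-1) 1 ψ hψc (ε / (2 * M))
    (by positivity)
  refine ⟨P, fun x hx => ?_⟩
  have hxI : x ∈ Set.Icc (-1:ℝ) 1 := Set.Ioo_subset_Icc_self hx
  have hwx : 0 < w x := w_pos hx
  have key1 : |g x - g x * χ x| ≤ ε / 2 := by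
    by_cases hc : χ x = 1
    · simp [hc, sub_self]; positivity
    · have hclt : χ x < 1 := lt_of_le_of_ne (hχ01 x).2 hc
      have habs : |1 - χ x| = 1 - χ x := abs_of_nonneg (by linarith [(hχ01 x).2])
      have : |g x - g x * χ x| = |g x| * (1 - χ x) := by
        rw [← mul_one_sub, abs_mul, habs]
      rw [this]
      calc |g x| * (1 - χ x) ≤ (ε / 2) * 1 :=
            mul_le_mul (hsmall x hxI hclt) (by linarith [(hχ01 x).1]) (by linarith [(hχ01 x).2])
              (by positivity)
        _ = ε / 2 := mul_one _
  have key2 : |g x * χ x - P.eval x * w x| ≤ ε / 2 := by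
    have hψw : ψ x * w x = g x * χ x := by
      rw [hψ]; field_simp
    calc |g x * χ x - P.eval x * w x| = |ψ x - P.eval x| * w x := by
          rw [← hψw, ← sub_mul, abs_mul, abs_of_pos hwx]
      _ ≤ (ε / (2 * M)) * M := by
          apply mul_le_mul ?_ (hMle x hxI) hwx.le (by positivity)
          rw [abs_sub_comm]
          exact (hP x hxI).le
      _ = ε / 2 := by field_simp
  calc |(f x - P.eval x) * w x| = |g x - P.eval x * w x| := by
        rw [sub_mul, hge x hx]
    _ ≤ |g x - g x * χ x| + |g x * χ x - P.eval x * w x| := abs_sub_le _ _ _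
    _ ≤ ε / 2 + ε / 2 := add_le_add key1 key2
    _ = ε := by ring


lemma err_tendsto {γ δ : ℝ} (hγ : 0 ≤ γ) (hδ : 0 ≤ δ) {v f : ℝ → ℝ}
    (hv : ∀ x ∈ Set.Ioo (-1 : ℝ) 1, v x = (1 - x) ^ γ * (1 + x) ^ δ)
    (hf : MemC0 γ δ f) :
    Filter.Tendsto (fun n => Err v f n) Filter.atTop (nhds 0) := by
  rw [Metric.tendsto_atTop]
  intro ε hε
  obtain ⟨g, hgc, hge, hg1, hg2⟩ := hf
  obtain ⟨P, hP⟩ := weier hγ hδ hgc hge hg1 hg2 (half_pos hε)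
  refine ⟨P.natDegree, fun n hn => ?_⟩
  have h1 : Err v f n ≤ ε / 2 := by
    refine le_trans (err_anti v f hn) (le_trans (err_le v f (le_refl P.natDegree)) ?_)
    refine wnorm_le (by positivity) fun x => ?_
    rw [hv x x.2]
    exact hP x x.2
  have h0 : 0 ≤ Err v f n := err_nonneg v f n
  rw [Real.dist_eq, sub_zero, abs_of_nonneg h0]
  linarith

/-- Convergence and near-best estimate (nearbest) for the filtered VP operator:
if the `V n` are uniformly bounded on `C^0_v`, produce polynomials of degree
`≤ n + m(n) - 1` and reproduce polynomials of degree `≤ n - m(n)`, with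
`c₁ m(n) ≤ n ≤ c₂ m(n)` (`c₂ ≥ c₁ > 1`) for `n ≥ n₀`, then for `f ∈ C^0_v`:
`‖(f - V_n^m f) v‖_∞ → 0` and
`E_{n+m-1}(f)_v ≤ ‖(f - V_n^m f) v‖_∞ ≤ C E_{n-m}(f)_v`. -/
theorem stmt17 (γ δ : ℝ) (hγ : 0 ≤ γ) (hδ : 0 ≤ δ) (v : ℝ → ℝ)
    (hv : ∀ x ∈ Set.Ioo (-1 : ℝ) 1, v x = (1 - x) ^ γ * (1 + x) ^ δ)
    (c₁ c₂ : ℝ) (hc₁ : 1 < c₁) (hc₁₂ : c₁ ≤ c₂)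
    (m : ℕ → ℕ) (n₀ : ℕ)
    (hm : ∀ n : ℕ, n₀ ≤ n → c₁ * (m n : ℝ) ≤ (n : ℝ) ∧ (n : ℝ) ≤ c₂ * (m n : ℝ))
    (V : ℕ → (ℝ → ℝ) → ℝ → ℝ) (C : ℝ)
    (hlin : ∀ (n : ℕ) (f g : ℝ → ℝ) (x : ℝ),
      V n (fun y => f y - g y) x = V n f x - V n g x)
    (hb : ∀ (n : ℕ) (f : ℝ → ℝ), MemC0 γ δ f → wnorm v (V n f) ≤ C * wnorm v f)
    (hpoly : ∀ (n : ℕ) (f : ℝ → ℝ), ∃ P : Polynomial ℝ,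
      P.natDegree ≤ n + m n - 1 ∧ ∀ x, V n f x = P.eval x)
    (hrepr : ∀ (n : ℕ) (P : Polynomial ℝ), P.natDegree ≤ n - m n →
      ∀ x, V n (fun y => P.eval y) x = P.eval x)
    (f : ℝ → ℝ) (hf : MemC0 γ δ f) :
    Filter.Tendsto (fun n : ℕ => wnorm v (fun x => f x - V n f x))
        Filter.atTop (nhds 0) ∧
      ∃ C' : ℝ, 0 < C' ∧ ∀ n : ℕ, n₀ ≤ n →
        Err v f (n + m n - 1) ≤ wnorm v (fun x => f x - V n f x) ∧
        wnorm v (fun x => f x - V n f x) ≤ C' * Err v f (n - m n) := by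
  set K : ℝ := 1 + max C 0 with hK
  have hK0 : 0 < K := by
    have := le_max_right C 0
    rw [hK]; linarith
  -- upper bound, valid for every n
  have hupper : ∀ n : ℕ,
      wnorm v (fun x => f x - V n f x) ≤ K * Err v f (n - m n) := by
    intro n
    have step : ∀ Q : Polynomial ℝ, Q.natDegree ≤ n - m n →
        wnorm v (fun x => f x - V n f x) ≤ K * wnorm v (fun x => f x - Q.eval x) := by
      intro Q hQ
      set h : ℝ → ℝ := fun y => f y - Q.eval y with hh
      have hC0h : MemC0 γ δ h := memC0_sub_poly hf hγ hδ Q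
      obtain ⟨gh, ghc, ghe, _, _⟩ := hC0h
      have bdd1 : BddAbove (Set.range fun x : Set.Ioo (-1:ℝ) 1 => |h x * v x|) :=
        bddAbove_of_ext hv ghc ghe
      obtain ⟨R, hRdeg, hReq⟩ := hpoly n h
      have bdd2 : BddAbove (Set.range fun x : Set.Ioo (-1:ℝ) 1 => |V n h x * v x|) := by
        refine bddAbove_of_ext hv
          (G := fun x => R.eval x * ((1 - x) ^ γ * (1 + x) ^ δ))
          ((R.continuous.mul (cont_w hγ hδ)).continuousOn) ?_
        intro x hx
        rw [hReq x]
      have hkey : ∀ x : ℝ, f x - V n f x = h x - V n h x := by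
        intro x
        have h1 : V n h x = V n f x - Q.eval x := by
          rw [hh, hlin n f (fun y => Q.eval y) x, hrepr n Q hQ x]
        rw [h1, hh]
        ring
      have tri : wnorm v (fun x => f x - V n f x) ≤ wnorm v h + wnorm v (V n h) := by
        refine wnorm_le (add_nonneg (wnorm_nonneg _ _) (wnorm_nonneg _ _)) fun x => ?_
        calc |(fun x => f x - V n f x) (x:ℝ) * v x|
            = |(h x * v x) - (V n h x * v x)| := by
              show |(f (x:ℝ) - V n f (x:ℝ)) * v (x:ℝ)| = _
              rw [hkey (x:ℝ)]; ring_nf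
          _ ≤ |h x * v x| + |V n h x * v x| := abs_sub _ _
          _ ≤ wnorm v h + wnorm v (V n h) := add_le_add (le_wnorm bdd1 x) (le_wnorm bdd2 x)
      have hVb : wnorm v (V n h) ≤ C * wnorm v h := hb n h (memC0_sub_poly hf hγ hδ Q)
      have h0 : 0 ≤ wnorm v h := wnorm_nonneg _ _
      have hCmax : C * wnorm v h ≤ max C 0 * wnorm v h :=
        mul_le_mul_of_nonneg_right (le_max_left C 0) h0
      have : wnorm v (fun x => f x - V n f x) ≤ K * wnorm v h := by
        rw [hK]; nlinarith
      exact this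
    refine le_of_forall_pos_le_add fun ε hε => ?_
    have hlt : Err v f (n - m n) < Err v f (n - m n) + ε / K := by
      have : 0 < ε / K := by positivity
      linarith
    obtain ⟨⟨Q, hQ⟩, hQlt⟩ := exists_lt_of_ciInf_lt hlt
    calc wnorm v (fun x => f x - V n f x)
        ≤ K * wnorm v (fun x => f x - Q.eval x) := step Q hQ
      _ ≤ K * (Err v f (n - m n) + ε / K) := mul_le_mul_of_nonneg_left hQlt.le hK0.le
      _ = K * Err v f (n - m n) + ε := by
          rw [mul_add, mul_div_cancel₀ _ (ne_of_gt hK0)]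
  constructor
  · -- convergence
    have htm : Filter.Tendsto (fun n : ℕ => n - m n) Filter.atTop Filter.atTop := by
      rw [Filter.tendsto_atTop]
      intro b
      obtain ⟨N, hN⟩ := exists_nat_ge ((b : ℝ) * c₁ / (c₁ - 1))
      filter_upwards [Filter.eventually_ge_atTop (max n₀ N)] with n hn
      have hn₀ : n₀ ≤ n := le_trans (le_max_left _ _) hn
      have hNn : (N : ℝ) ≤ n := Nat.cast_le.2 (le_trans (le_max_right _ _) hn)
      obtain ⟨hml, _⟩ := hm n hn₀
      have hc₁0 : 0 < c₁ := lt_trans one_pos hc₁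
      have hmn : (m n : ℝ) ≤ (n : ℝ) / c₁ := by
        rw [le_div_iff₀ hc₁0]; linarith
      have hmln : m n ≤ n := by
        have : (m n : ℝ) ≤ (n : ℝ) :=
          le_trans hmn (div_le_self (Nat.cast_nonneg n) hc₁.le)
        exact_mod_cast this
      have hbr : (b : ℝ) ≤ (n : ℝ) - m n := by
        have h1 : (b : ℝ) * c₁ / (c₁ - 1) ≤ n := le_trans hN hNn
        have h2 : (b : ℝ) * c₁ ≤ n * (c₁ - 1) := by
          rw [div_le_iff₀ (by linarith : (0:ℝ) < c₁ - 1)] at h1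
          linarith
        have h3 : (b : ℝ) ≤ n * (c₁ - 1) / c₁ := (le_div_iff₀ hc₁0).2 h2
        have h4 : (n : ℝ) * (c₁ - 1) / c₁ = n - n / c₁ := by
          field_simp
        rw [h4] at h3
        linarith
      rw [← Nat.cast_sub hmln] at hbr
      exact_mod_cast hbr
    have hE : Filter.Tendsto (fun n : ℕ => Err v f (n - m n)) Filter.atTop (nhds 0) :=
      (err_tendsto hγ hδ hv hf).comp htm
    refine squeeze_zero (fun n => wnorm_nonneg _ _) (fun n => hupper n) ?_
    simpa using hE.const_mul K
  · -- near-best bounds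
    refine ⟨K, hK0, fun n hn => ⟨?_, hupper n⟩⟩
    obtain ⟨P, hPd, hPe⟩ := hpoly n f
    have heq : (fun x => f x - P.eval x) = fun x => f x - V n f x :=
      funext fun x => by rw [hPe x]
    have := err_le v f hPd
    rwa [heq] at this
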